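/- Let F₂ = ⟨a,b⟩, H = ⟨b, ababa⟩, g = a, with h₁ = b, h₂ = ababa. For every non-zero integer i, the commutator [(h₂h₁)^i, x h₁] is a non-trivial element of I_g = ker φ_g of degree 2. Moreover I_g contains no non-trivial equation of degree 0 or 1, so the minimum degree of a non-trivial equation in I_g is 2. -/

import Mathlib

/-!
A kernel element of degree 0 is conjugate to some `inl h`, and `φ` is injective on `H`; one of
degree 1 is conjugate to `u x^{±1} v`, which forces `a^{±1} = u⁻¹ v⁻¹ ∈ H`, impossible since the
exponent sum of `a` on `H = ⟨b, ababa⟩` is divisible by 3. For the commutator, `h₂h₁ = (ab)³`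
commutes with `φ(x h₁) = ab`, so it lies in the kernel; conjugating by `(h₂h₁)^{-i}` writes it as
`x (h₁ k⁻¹ h₁⁻¹) x⁻¹ k`, `k = (h₂h₁)^i`, with two occurrences of `x`, and it is nontrivial because its image in
the infinite dihedral group under `h ↦ r^{exp_a h}`, `x ↦ s` is `r^{6i}`.
-/

open Monoid
open scoped Monoid.Coprod
open scoped commutatorElement

/-- The generator `x` of the infinite cyclic group `⟨x⟩ = Multiplicative ℤ`. -/
def xgen : Multiplicative ℤ := Multiplicative.ofAdd 1

/-- An alternating expression `h₀ · x^{β₁} c₁ · x^{β₂} c₂ ⋯ x^{β_m} c_m` in `H ∗ ⟨x⟩`,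
recorded by the head coefficient `h₀` and the list `l = [(β₁,c₁),…,(β_m,c_m)]`. -/
def coprodExpr {H : Type*} [Group H] (h₀ : H) (l : List (ℤ × H)) : H ∗ Multiplicative ℤ :=
  Coprod.inl h₀ * (l.map fun p => Coprod.inr (xgen ^ p.1) * Coprod.inl p.2).prod

/-- The degree of an equation `w ∈ H ∗ ⟨x⟩`: the number of occurrences of `x` and `x⁻¹`
in the cyclic reduction of `w`.  Equivalently (and this is how we formalize it), it is the
minimum, over all elements conjugate to `w` and over all ways of writing such a conjugate as
an alternating expression `h₀ x^{β₁} c₁ ⋯ x^{β_m} c_m`, of the total number `∑ᵢ |βᵢ|` of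
occurrences of `x^{±1}`; this minimum is achieved exactly by the cyclic reduction of `w`. -/
noncomputable def degree {H : Type*} [Group H] (w : H ∗ Multiplicative ℤ) : ℕ :=
  sInf { n | ∃ (c : H ∗ Multiplicative ℤ) (h₀ : H) (l : List (ℤ × H)),
      c * w * c⁻¹ = coprodExpr h₀ l ∧ (l.map fun p => p.1.natAbs).sum = n }

section CoprodExpr

variable {H : Type*} [Group H]

lemma xgen_zpow (k : ℤ) : xgen ^ k = Multiplicative.ofAdd k := by
  simp [xgen, ← ofAdd_zsmul]

lemma coprodExpr_nil (h₀ : H) : coprodExpr h₀ ([] : List (ℤ × H)) = Coprod.inl h₀ := by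
  simp [coprodExpr]

lemma coprodExpr_cons (h₀ : H) (β : ℤ) (c : H) (l : List (ℤ × H)) :
    coprodExpr h₀ ((β, c) :: l) = Coprod.inl h₀ * Coprod.inr (xgen ^ β) * coprodExpr c l := by
  simp [coprodExpr, mul_assoc]

lemma coprodExpr_mul_coprodExpr (h₀ h₀' : H) (l l' : List (ℤ × H)) :
    coprodExpr h₀ l * coprodExpr h₀' l' = coprodExpr h₀ (l ++ (0, h₀') :: l') := by
  simp [coprodExpr, mul_assoc]

lemma exists_coprodExpr_eq (w : H ∗ Multiplicative ℤ) :
    ∃ (h₀ : H) (l : List (ℤ × H)), coprodExpr h₀ l = w := by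
  induction w using Coprod.induction_on with
  | inl h => exact ⟨h, [], coprodExpr_nil h⟩
  | inr n => exact ⟨1, [(n.toAdd, 1)], by simp [coprodExpr_cons, coprodExpr_nil, xgen_zpow]⟩
  | mul v w hv hw =>
    obtain ⟨h₀, l, rfl⟩ := hv
    obtain ⟨h₀', l', rfl⟩ := hw
    exact ⟨h₀, _, (coprodExpr_mul_coprodExpr h₀ h₀' l l').symm⟩

lemma coprodExpr_eq_inl_of_sum_natAbs_eq_zero (h₀ : H) (l : List (ℤ × H))
    (hl : (l.map fun p => p.1.natAbs).sum = 0) :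
    coprodExpr h₀ l = Coprod.inl (h₀ * (l.map Prod.snd).prod) := by
  induction l generalizing h₀ with
  | nil => simp [coprodExpr_nil]
  | cons p l ih =>
    obtain ⟨β, c⟩ := p
    simp only [List.map_cons, List.sum_cons, Nat.add_eq_zero_iff, Int.natAbs_eq_zero] at hl
    obtain ⟨rfl, hl⟩ := hl
    simp [coprodExpr_cons, ih c hl]

lemma exists_coprodExpr_eq_of_sum_natAbs_eq_one (h₀ : H) (l : List (ℤ × H))
    (hl : (l.map fun p => p.1.natAbs).sum = 1) :
    ∃ (u v : H) (ε : ℤ), ε.natAbs = 1 ∧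
      coprodExpr h₀ l = Coprod.inl u * Coprod.inr (xgen ^ ε) * Coprod.inl v := by
  induction l generalizing h₀ with
  | nil => simp at hl
  | cons p l ih =>
    obtain ⟨β, c⟩ := p
    simp only [List.map_cons, List.sum_cons] at hl
    obtain hβ | hβ : β.natAbs = 0 ∨ β.natAbs = 1 := by omega
    · rw [Int.natAbs_eq_zero] at hβ
      subst hβ
      obtain ⟨u, v, ε, hε, hl'⟩ := ih c (by simpa using hl)
      exact ⟨h₀ * u, v, ε, hε, by simp [coprodExpr_cons, hl', mul_assoc]⟩
    · refine ⟨h₀, c * (l.map Prod.snd).prod, β, hβ, ?_⟩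
      rw [coprodExpr_cons, coprodExpr_eq_inl_of_sum_natAbs_eq_zero c l (by omega), map_mul]

end CoprodExpr

section Degree

variable {H : Type*} [Group H]

lemma degree_le_of_conj_eq {c w : H ∗ Multiplicative ℤ} {h₀ : H} {l : List (ℤ × H)}
    (h : c * w * c⁻¹ = coprodExpr h₀ l) : degree w ≤ (l.map fun p => p.1.natAbs).sum :=
  Nat.sInf_le ⟨c, h₀, l, h, rfl⟩

lemma exists_conj_eq_coprodExpr_sum_eq_degree (w : H ∗ Multiplicative ℤ) :
    ∃ (c : H ∗ Multiplicative ℤ) (h₀ : H) (l : List (ℤ × H)),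
      c * w * c⁻¹ = coprodExpr h₀ l ∧ (l.map fun p => p.1.natAbs).sum = degree w := by
  obtain ⟨h₀, l, hl⟩ := exists_coprodExpr_eq w
  have hne : {n | ∃ (c : H ∗ Multiplicative ℤ) (h₀ : H) (l : List (ℤ × H)),
      c * w * c⁻¹ = coprodExpr h₀ l ∧ (l.map fun p => p.1.natAbs).sum = n}.Nonempty :=
    ⟨_, 1, h₀, l, by simp [hl], rfl⟩
  exact Nat.sInf_mem hne

lemma degree_commutatorElement_inl_le_two (k h : H) :
    degree ⁅(Coprod.inl k : H ∗ Multiplicative ℤ), Coprod.inr xgen * Coprod.inl h⁆ ≤ 2 := by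
  refine degree_le_of_conj_eq (c := Coprod.inl k⁻¹) (h₀ := 1)
    (l := [(1, h * k⁻¹ * h⁻¹), (-1, k)]) ?_
  simp only [coprodExpr_cons, coprodExpr_nil, commutatorElement_def, map_mul, map_inv, map_one,
    zpow_one, zpow_neg]
  group

open DihedralGroup in
/-- The image in `DihedralGroup 0` under `h ↦ r (χ h)`, `x ↦ sr 0` is `r (2 χ k)`. -/
lemma commutatorElement_inl_ne_one (χ : H →* Multiplicative ℤ) {k : H} (hk : χ k ≠ 1) (h : H) :
    ⁅(Coprod.inl k : H ∗ Multiplicative ℤ), Coprod.inr xgen * Coprod.inl h⁆ ≠ 1 := by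
  intro h1
  have := congrArg (Coprod.lift ((zpowersHom (DihedralGroup 0) (r 1)).comp χ)
    (zpowersHom (DihedralGroup 0) (sr 0))) h1
  rw [map_one, one_def] at this
  simp [commutatorElement_def, xgen, -r_zero] at this
  ring_nf at this
  exact hk (toAdd_eq_zero.mp (by simpa using this))

end Degree

section Kernel

variable {G : Type*} [Group G] {H : Subgroup G} {g : G}

lemma two_le_sum_natAbs_of_coprodExpr_mem_ker (hg : g ∉ H) {h₀ : H} {l : List (ℤ × H)}
    (hmem : coprodExpr h₀ l ∈ (Coprod.lift H.subtype (zpowersHom G g)).ker)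
    (hne : coprodExpr h₀ l ≠ 1) : 2 ≤ (l.map fun p => p.1.natAbs).sum := by
  rw [MonoidHom.mem_ker] at hmem
  by_contra! hlt
  obtain hl | hl : (l.map fun p => p.1.natAbs).sum = 0 ∨ (l.map fun p => p.1.natAbs).sum = 1 := by
    omega
  · rw [coprodExpr_eq_inl_of_sum_natAbs_eq_zero h₀ l hl] at hmem hne
    rw [Coprod.lift_apply_inl, Subgroup.coe_subtype, OneMemClass.coe_eq_one] at hmem
    exact hne (by rw [hmem, map_one])
  · obtain ⟨u, v, ε, hε, he⟩ := exists_coprodExpr_eq_of_sum_natAbs_eq_one h₀ l hl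
    rw [he, map_mul, map_mul, Coprod.lift_apply_inl, Coprod.lift_apply_inl, Coprod.lift_apply_inr,
      zpowersHom_apply, xgen_zpow, toAdd_ofAdd] at hmem
    have hgε : g ^ ε ∈ H := by
      rw [eq_inv_mul_of_mul_eq (eq_inv_of_mul_eq_one_left hmem)]
      exact mul_mem (inv_mem u.2) (inv_mem v.2)
    rcases Int.natAbs_eq_iff.mp hε with rfl | rfl <;> simp_all

lemma two_le_degree_of_mem_ker (hg : g ∉ H) {w : H ∗ Multiplicative ℤ}
    (hw : w ∈ (Coprod.lift H.subtype (zpowersHom G g)).ker) (hne : w ≠ 1) : 2 ≤ degree w := by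
  obtain ⟨c, h₀, l, hc, hl⟩ := exists_conj_eq_coprodExpr_sum_eq_degree w
  have hmem : coprodExpr h₀ l ∈ (Coprod.lift H.subtype (zpowersHom G g)).ker :=
    hc ▸ (MonoidHom.normal_ker _).conj_mem w hw c
  have hne' : coprodExpr h₀ l ≠ 1 := by
    rw [← hc]
    simpa using hne
  exact hl ▸ two_le_sum_natAbs_of_coprodExpr_mem_ker hg hmem hne'

theorem commutatorElement_inl_mem_ker_ne_one_degree_eq_two (hg : g ∉ H) {k h : H}
    (hcomm : Commute (k : G) (g * h)) (χ : H →* Multiplicative ℤ) (hk : χ k ≠ 1) :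
    ⁅(Coprod.inl k : H ∗ Multiplicative ℤ), Coprod.inr xgen * Coprod.inl h⁆ ∈
        (Coprod.lift H.subtype (zpowersHom G g)).ker ∧
      ⁅(Coprod.inl k : H ∗ Multiplicative ℤ), Coprod.inr xgen * Coprod.inl h⁆ ≠ 1 ∧
      degree ⁅(Coprod.inl k : H ∗ Multiplicative ℤ), Coprod.inr xgen * Coprod.inl h⁆ = 2 := by
  have hker : ⁅(Coprod.inl k : H ∗ Multiplicative ℤ), Coprod.inr xgen * Coprod.inl h⁆ ∈
      (Coprod.lift H.subtype (zpowersHom G g)).ker := by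
    rw [MonoidHom.mem_ker, map_commutatorElement, commutatorElement_eq_one_iff_commute]
    simpa [xgen] using hcomm
  have hne := commutatorElement_inl_ne_one χ hk h
  exact ⟨hker, hne, le_antisymm (degree_commutatorElement_inl_le_two k h)
    (two_le_degree_of_mem_ker hg hker hne)⟩

end Kernel

lemma of_true_not_mem_closure :
    FreeGroup.of true ∉ Subgroup.closure {FreeGroup.of false,
      FreeGroup.of true * FreeGroup.of false * FreeGroup.of true * FreeGroup.of false *
        FreeGroup.of true} := by
  let χ : FreeGroup Bool →* Multiplicative (ZMod 3) :=
    FreeGroup.lift (Pi.mulSingle true (Multiplicative.ofAdd 1))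
  intro h
  have := (Subgroup.closure_le χ.ker).mpr ?_ h
  · simp [χ] at this
  · simp [Set.insert_subset_iff, χ]
    rfl

/-- in `F₂ = ⟨a,b⟩` with `h₁ = b`, `h₂ = ababa`, `H = ⟨h₁,h₂⟩`, `g = a`:
for every non-zero integer `i` the commutator `[(h₂h₁)^i, x h₁]` is a non-trivial element
of `I_g = ker φ_g` of degree 2; moreover `I_g` contains no non-trivial equation of
degree 0 or 1, so 2 is the minimum degree of a non-trivial equation in `I_g`. -/
theorem stmt11 (a b : FreeGroup Bool) (ha : a = FreeGroup.of true) (hb : b = FreeGroup.of false)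
    (H : Subgroup (FreeGroup Bool)) (hHdef : H = Subgroup.closure {b, a * b * a * b * a})
    (h₁ h₂ : ↥H) (hh₁ : (h₁ : FreeGroup Bool) = b)
    (hh₂ : (h₂ : FreeGroup Bool) = a * b * a * b * a)
    (φ : ↥H ∗ Multiplicative ℤ →* FreeGroup Bool)
    (hφ : φ = Coprod.lift H.subtype (zpowersHom (FreeGroup Bool) a)) :
    (∀ i : ℤ, i ≠ 0 → ∀ w : ↥H ∗ Multiplicative ℤ,
      w = ⁅(Coprod.inl ((h₂ * h₁) ^ i) : ↥H ∗ Multiplicative ℤ),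
        (Coprod.inr xgen : ↥H ∗ Multiplicative ℤ) * Coprod.inl h₁⁆ →
      w ∈ φ.ker ∧ w ≠ 1 ∧ degree w = 2) ∧
    (∀ w ∈ φ.ker, w ≠ 1 → 2 ≤ degree w) ∧
    IsLeast {d : ℕ | ∃ w ∈ φ.ker, w ≠ 1 ∧ degree w = d} 2 := by
  subst ha hb hφ
  have hg : FreeGroup.of true ∉ H := hHdef ▸ of_true_not_mem_closure
  have hk : ((h₂ * h₁ : H) : FreeGroup Bool) = (FreeGroup.of true * FreeGroup.of false) ^ 3 := by
    rw [Subgroup.coe_mul, hh₁, hh₂]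
    simp only [pow_succ, pow_zero, one_mul, mul_assoc]
  have hcomm (i : ℤ) :
      Commute (((h₂ * h₁) ^ i : H) : FreeGroup Bool) (FreeGroup.of true * h₁) := by
    rw [SubgroupClass.coe_zpow, hk, hh₁]
    exact ((Commute.refl _).pow_left 3).zpow_left i
  let χ := (FreeGroup.lift (Pi.mulSingle true (Multiplicative.ofAdd (1 : ℤ)))).comp H.subtype
  have hχ (i : ℤ) (hi : i ≠ 0) : χ ((h₂ * h₁) ^ i) ≠ 1 := by
    simpa [χ, hk] using hi
  have hmain (i : ℤ) (hi : i ≠ 0) :=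
    commutatorElement_inl_mem_ker_ne_one_degree_eq_two hg (hcomm i) χ (hχ i hi)
  refine ⟨fun i hi w hw => hw ▸ hmain i hi, fun w => two_le_degree_of_mem_ker hg,
    ⟨_, hmain 1 one_ne_zero⟩, ?_⟩
  rintro d ⟨w, hw, hne, rfl⟩
  exact two_le_degree_of_mem_ker hg hw hne
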